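/- A third-order tensor Q of size n×n×n3 over ℂ is orthogonal (Qᵀ' * Q = Q * Qᵀ' = I in the t-product sense, with conjugate tensor transpose) if and only if every frontal slice of its mode-3 DFT is a unitary n×n matrix. -/

import Mathlib

open Finset Complex
open scoped ComplexOrder

/-- The root `ζ = exp(-2πi/n)` used in the mode-3 DFT. -/
noncomputable def dftRoot (n : ℕ) : ℂ := Complex.exp (-2 * Real.pi * Complex.I / n)

/-- Mode-3 DFT of a third-order tensor: `Â(i,j,ω) = ∑ k, A(i,j,k) ζ^{ωk}`. -/
noncomputable def dft3 {n1 n2 n3 : ℕ} [NeZero n3]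
    (A : Fin n1 → Fin n2 → ZMod n3 → ℂ) (i : Fin n1) (j : Fin n2) (w : ZMod n3) : ℂ :=
  ∑ k : ZMod n3, A i j k * dftRoot n3 ^ (w * k).val

/-- t-product of third-order complex tensors via circular convolution of tubes. -/
noncomputable def tProdC {n1 n2 n4 n3 : ℕ} [NeZero n3]
    (A : Fin n1 → Fin n2 → ZMod n3 → ℂ) (B : Fin n2 → Fin n4 → ZMod n3 → ℂ) :
    Fin n1 → Fin n4 → ZMod n3 → ℂ :=
  fun i j t => ∑ k : Fin n2, ∑ s : ZMod n3, A i k s * B k j (t - s)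

/-- Conjugate tensor transpose: `Aᵀ'(i,j,k) = conj (A(j,i,-k))`. -/
noncomputable def ctT {n1 n2 n3 : ℕ} (A : Fin n1 → Fin n2 → ZMod n3 → ℂ) :
    Fin n2 → Fin n1 → ZMod n3 → ℂ :=
  fun i j k => starRingEnd ℂ (A j i (-k))

/-- The identity tensor: `I(i,i,0) = 1` and zero elsewhere. -/
noncomputable def idTC (n n3 : ℕ) : Fin n → Fin n → ZMod n3 → ℂ :=
  fun i j k => if i = j ∧ k = 0 then 1 else 0

/-- A tensor `Q` is orthogonal if `Qᵀ' * Q = Q * Qᵀ' = I` in the t-product sense. -/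
noncomputable def IsOrthT {n n3 : ℕ} [NeZero n3] (Q : Fin n → Fin n → ZMod n3 → ℂ) : Prop :=
  tProdC (ctT Q) Q = idTC n n3 ∧ tProdC Q (ctT Q) = idTC n n3

/-- The `ω`-th frontal slice of the mode-3 DFT of a tensor. -/
noncomputable def sliceDFT {n1 n2 n3 : ℕ} [NeZero n3]
    (A : Fin n1 → Fin n2 → ZMod n3 → ℂ) (w : ZMod n3) : Matrix (Fin n1) (Fin n2) ℂ :=
  Matrix.of fun i j => dft3 A i j w

/-- Squared Frobenius norm of a third-order tensor. -/
noncomputable def frob2 {n1 n2 n3 : ℕ} [NeZero n3]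
    (A : Fin n1 → Fin n2 → ZMod n3 → ℂ) : ℝ :=
  ∑ i : Fin n1, ∑ j : Fin n2, ∑ k : ZMod n3, ‖A i j k‖ ^ 2

/-- Nuclear norm of a matrix: sum of singular values, i.e. `Re (trace √(Mᴴ M))`. -/
noncomputable def nuclearNorm {m n : Type*} [Fintype m] [Fintype n] [DecidableEq n]
    (M : Matrix m n ℂ) : ℝ :=
  (((Matrix.posSemidef_conjTranspose_mul_self M).1.eigenvectorUnitary : Matrix n n ℂ) *
    Matrix.diagonal (((↑) : ℝ → ℂ) ∘ Real.sqrt ∘ (Matrix.posSemidef_conjTranspose_mul_self M).1.eigenvalues) *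
    (star (Matrix.posSemidef_conjTranspose_mul_self M).1.eigenvectorUnitary : Matrix n n ℂ)).trace.re

/-!
Viewing a tensor as the family `ZMod n3 → Matrix` of its frontal slices, the mode-3 DFT is the
discrete Fourier transform `ZMod.dft` of a matrix-valued function (the paper's root `ζ` is the
conjugate of Mathlib's standard character). The t-product is a circular convolution with matrix
multiplication as the product, so the DFT turns it into slicewise matrix products; it turns the
conjugate transpose into slicewise conjugate transposes and the identity tensor into the constant
identity matrix. As the DFT is injective, `Qᵀ' * Q = I` and `Q * Qᵀ' = I` hold iff
`Q̂_ωᴴ Q̂_ω = 1` and `Q̂_ω Q̂_ωᴴ = 1` for every `ω`, i.e. iff every slice `Q̂_ω` is unitary.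
-/

open ZMod
open scoped Matrix

namespace ZMod

variable {N : ℕ} [NeZero N]

lemma dft_convolution {E F G : Type*} [AddCommGroup E] [Module ℂ E] [AddCommGroup F]
    [Module ℂ F] [AddCommGroup G] [Module ℂ G] (μ : E →ₗ[ℂ] F →ₗ[ℂ] G) (Φ : ZMod N → E)
    (Ψ : ZMod N → F) (k : ZMod N) :
    𝓕 (fun t => ∑ s, μ (Φ s) (Ψ (t - s))) k = μ (𝓕 Φ k) (𝓕 Ψ k) := by
  simp only [dft_apply, map_sum, LinearMap.sum_apply, LinearMap.map_smul, LinearMap.smul_apply,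
    smul_smul, Finset.smul_sum]
  rw [Finset.sum_comm]
  conv_rhs => rw [Finset.sum_comm]
  refine Finset.sum_congr rfl fun s _ => Fintype.sum_equiv (Equiv.subRight s) _ _ fun t => ?_
  rw [Equiv.subRight_apply, ← AddChar.map_add_eq_mul]
  congr 2
  ring

lemma dft_semilinear_comp_neg {E F : Type*} [AddCommGroup E] [Module ℂ E] [AddCommGroup F]
    [Module ℂ F] (L : E →ₗ⋆[ℂ] F) (Φ : ZMod N → E) (k : ZMod N) :
    𝓕 (fun j => L (Φ (-j))) k = L (𝓕 Φ k) := by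
  simp only [dft_apply, map_sum, LinearMap.map_smulₛₗ, ← AddChar.map_neg_eq_conj]
  exact Fintype.sum_equiv (Equiv.neg _) _ _ fun j => by simp

lemma dft_single_zero {E : Type*} [AddCommGroup E] [Module ℂ E] (x : E) :
    𝓕 (Pi.single 0 x : ZMod N → E) = fun _ => x := by
  ext k
  rw [dft_apply, Fintype.sum_eq_single 0 fun j hj => by simp [hj]]
  simp

end ZMod

lemma dftRoot_pow_val {N : ℕ} [NeZero N] (a : ZMod N) :
    dftRoot N ^ a.val = stdAddChar (-a) := by
  rw [AddChar.map_neg_eq_conj, stdAddChar_apply, toCircle_apply, ← Complex.exp_conj, dftRoot,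
    ← Complex.exp_nat_mul]
  congr 1
  simp only [map_div₀, map_mul, Complex.conj_ofReal, Complex.conj_I, map_natCast, map_ofNat]
  ring

section

variable {n1 n2 n3 : ℕ}

def frontalSlice (A : Fin n1 → Fin n2 → ZMod n3 → ℂ) (k : ZMod n3) :
    Matrix (Fin n1) (Fin n2) ℂ :=
  Matrix.of fun i j => A i j k

lemma frontalSlice_injective :
    Function.Injective (frontalSlice : (Fin n1 → Fin n2 → ZMod n3 → ℂ) → _) :=
  fun _ _ h => funext₃ fun i j k => congrFun₂ (congrFun h k) i j

lemma frontalSlice_tProdC [NeZero n3] {n4 : ℕ} (A : Fin n1 → Fin n2 → ZMod n3 → ℂ)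
    (B : Fin n2 → Fin n4 → ZMod n3 → ℂ) (t : ZMod n3) :
    frontalSlice (tProdC A B) t = ∑ s, frontalSlice A s * frontalSlice B (t - s) := by
  ext i j
  simp only [frontalSlice, tProdC, Matrix.sum_apply, Matrix.mul_apply, Matrix.of_apply]
  exact Finset.sum_comm

lemma frontalSlice_ctT (A : Fin n1 → Fin n2 → ZMod n3 → ℂ) (k : ZMod n3) :
    frontalSlice (ctT A) k = (frontalSlice A (-k))ᴴ := by
  ext i j
  rfl

lemma frontalSlice_idTC (n : ℕ) [DecidableEq (Fin n)] :
    frontalSlice (idTC n n3) = Pi.single 0 1 := by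
  ext k i j
  by_cases hk : k = 0 <;> simp [frontalSlice, idTC, Matrix.one_apply, hk]

variable [NeZero n3]

lemma sliceDFT_eq_dft (A : Fin n1 → Fin n2 → ZMod n3 → ℂ) :
    sliceDFT A = 𝓕 (frontalSlice A) := by
  ext w i j
  simp [sliceDFT, dft3, frontalSlice, dft_apply, Matrix.sum_apply, dftRoot_pow_val, mul_comm]

lemma sliceDFT_injective :
    Function.Injective (sliceDFT : (Fin n1 → Fin n2 → ZMod n3 → ℂ) → _) := by
  intro A B h
  simp only [sliceDFT_eq_dft] at h
  exact frontalSlice_injective (dft.injective h)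

lemma sliceDFT_tProdC {n4 : ℕ} (A : Fin n1 → Fin n2 → ZMod n3 → ℂ)
    (B : Fin n2 → Fin n4 → ZMod n3 → ℂ) (w : ZMod n3) :
    sliceDFT (tProdC A B) w = sliceDFT A w * sliceDFT B w := by
  simpa only [sliceDFT_eq_dft, funext (frontalSlice_tProdC A B), mulLinearMap_apply_apply] using
    dft_convolution (mulLinearMap ℂ) (frontalSlice A) (frontalSlice B) w

lemma sliceDFT_ctT (A : Fin n1 → Fin n2 → ZMod n3 → ℂ) (w : ZMod n3) :
    sliceDFT (ctT A) w = (sliceDFT A w)ᴴ := by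
  simp only [sliceDFT_eq_dft, funext (frontalSlice_ctT A)]
  exact dft_semilinear_comp_neg (Matrix.conjTransposeLinearEquiv _ _ ℂ ℂ).toLinearMap _ w

lemma sliceDFT_idTC (n : ℕ) [DecidableEq (Fin n)] (w : ZMod n3) :
    sliceDFT (idTC n n3) w = 1 := by
  rw [sliceDFT_eq_dft, frontalSlice_idTC, dft_single_zero]

lemma tProdC_eq_idTC_iff {n : ℕ} [DecidableEq (Fin n)] (A B : Fin n → Fin n → ZMod n3 → ℂ) :
    tProdC A B = idTC n n3 ↔ ∀ w, sliceDFT A w * sliceDFT B w = 1 := by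
  rw [← sliceDFT_injective.eq_iff, funext_iff]
  simp only [sliceDFT_tProdC, sliceDFT_idTC]

end

/-- A tensor is orthogonal (w.r.t. the t-product and conjugate tensor transpose) iff
every frontal slice of its mode-3 DFT is a unitary matrix. -/
theorem isOrthT_iff_unitary {n n3 : ℕ} [NeZero n3] [DecidableEq (Fin n)]
    (Q : Fin n → Fin n → ZMod n3 → ℂ) :
    IsOrthT Q ↔ ∀ w : ZMod n3, sliceDFT Q w ∈ Matrix.unitaryGroup (Fin n) ℂ := by
  simp only [IsOrthT, tProdC_eq_idTC_iff, sliceDFT_ctT, ← forall_and, Unitary.mem_iff,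
    Matrix.star_eq_conjTranspose]
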